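/- Subharmonic mean-value comparison: if u is a nonnegative subharmonic function on a neighborhood of the closed disc B_{1/2}(a) ⊂ ℂ, then ∫_{B_{1/4}(a)} u dμ₂ ≤ C·∫_{B_{1/2}(a) \ B_{1/4}(a)} u dμ₂ for an absolute constant C > 0 (independent of a and u), where μ₂ is planar Lebesgue measure. -/

import Mathlib

/-!
Let `M = f z₀` be the maximum of `f` on `closedBall a ρ` and `d = dist z₀ a ≤ ρ`. The disc
`ball z₀ R` with `R = 2ρ - d ≥ ρ` lies in `closedBall a (2ρ)`, and integrating the circle
sub-mean inequality in polar coordinates gives `π R² M ≤ ∫_{ball z₀ R} f`. By Apollonius' theorem,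
`ball z₀ R ∩ ball a ρ` lies in a disc about the midpoint of `z₀` and `a` of area at most
`3πR²/4`, and there `f ≤ M`; the rest of `ball z₀ R` lies in the annulus. Hence
`πR²M/4 ≤ ∫_annulus f`, while `∫_{ball a ρ} f ≤ πρ²M ≤ πR²M`.
-/

open Real MeasureTheory Complex

/-- A continuous function satisfying the sub-mean-value inequality on circles
contained (with their closed discs) in `s`. -/
def SubmeanOn (f : ℂ → ℝ) (s : Set ℂ) : Prop :=
  ContinuousOn f s ∧
    ∀ c : ℂ, ∀ r : ℝ, 0 < r → Metric.closedBall c r ⊆ s →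
      f c ≤ (1 / (2 * π)) * ∫ θ in (0:ℝ)..(2*π), f (c + r * Complex.exp (θ * Complex.I))

open Metric Set

theorem ball_inter_ball_subset_closedBall_midpoint {V P : Type*} [NormedAddCommGroup V]
    [InnerProductSpace ℝ V] [MetricSpace P] [NormedAddTorsor V P] (x y : P) (r s : ℝ) :
    ball x r ∩ ball y s ⊆ closedBall (midpoint ℝ x y) √((r ^ 2 + s ^ 2) / 2 - dist x y ^ 2 / 4) := by
  rintro z ⟨hzx, hzy⟩
  have hx : dist z x ^ 2 < r ^ 2 := pow_lt_pow_left₀ hzx dist_nonneg two_ne_zero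
  have hy : dist z y ^ 2 < s ^ 2 := pow_lt_pow_left₀ hzy dist_nonneg two_ne_zero
  have := EuclideanGeometry.dist_sq_add_dist_sq_eq_two_mul_dist_midpoint_sq_add_half_dist_sq z x y
  exact Real.le_sqrt_of_sq_le (by linarith)

theorem Complex.volume_real_closedBall (a : ℂ) {r : ℝ} (hr : 0 ≤ r) :
    volume.real (closedBall a r) = π * r ^ 2 := by
  simp [measureReal_def, ENNReal.toReal_ofReal hr, mul_comm]

theorem Complex.volume_real_ball (a : ℂ) {r : ℝ} (hr : 0 ≤ r) :
    volume.real (ball a r) = π * r ^ 2 := by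
  simp [measureReal_def, ENNReal.toReal_ofReal hr, mul_comm]

theorem Complex.volume_real_ball_inter_ball_le {x y : ℂ} {r s : ℝ} (h : dist x y ≤ r + s) :
    volume.real (ball x r ∩ ball y s) ≤ π * ((r ^ 2 + s ^ 2) / 2 - dist x y ^ 2 / 4) := by
  have hnonneg : 0 ≤ (r ^ 2 + s ^ 2) / 2 - dist x y ^ 2 / 4 := by
    nlinarith [dist_nonneg (x := x) (y := y), sq_nonneg (r - s)]
  calc volume.real (ball x r ∩ ball y s)
      ≤ volume.real (closedBall (midpoint ℝ x y) √((r ^ 2 + s ^ 2) / 2 - dist x y ^ 2 / 4)) :=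
        measureReal_mono (ball_inter_ball_subset_closedBall_midpoint x y r s)
          measure_closedBall_lt_top.ne
    _ = π * ((r ^ 2 + s ^ 2) / 2 - dist x y ^ 2 / 4) := by
        rw [Complex.volume_real_closedBall _ (sqrt_nonneg _), sq_sqrt hnonneg]

section PolarCoord

variable {E : Type*} [NormedAddCommGroup E] [NormedSpace ℝ E]

theorem setIntegral_Ioo_neg_pi_pi_comp_circleMap (f : ℂ → E) (c : ℂ) (r : ℝ) :
    ∫ θ in Ioo (-π) π, f (circleMap c r θ) = (2 * π) • circleAverage f c r := by
  rw [circleAverage_eq_integral_add (-π), smul_inv_smul₀ (by positivity),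
    intervalIntegral.integral_comp_add_right (fun θ ↦ f (circleMap c r θ)),
    intervalIntegral.integral_of_le (by linarith [pi_pos]), integral_Ioc_eq_integral_Ioo]
  ring_nf

theorem Complex.add_polarCoord_symm_eq_circleMap (c : ℂ) (p : ℝ × ℝ) :
    c + Complex.polarCoord.symm p = circleMap c p.1 p.2 := by
  simp [circleMap, Complex.exp_mul_I, ← ofReal_cos, ← ofReal_sin]

theorem setIntegral_ball_eq_intervalIntegral_circleAverage {f : ℂ → E} {c : ℂ} {R : ℝ}
    (hR : 0 ≤ R) (hf : ContinuousOn f (closedBall c R)) :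
    ∫ z in ball c R, f z = ∫ r in 0..R, (2 * π * r) • circleAverage f c r := by
  set S : Set (ℝ × ℝ) := Ioo 0 R ×ˢ Ioo (-π) π
  have hS : MeasurableSet S := measurableSet_Ioo.prod measurableSet_Ioo
  have hdist (r θ : ℝ) : dist (circleMap c r θ) c = |r| := circleMap_mem_sphere' c r θ
  have hint : IntegrableOn (fun p : ℝ × ℝ ↦ p.1 • f (circleMap c p.1 p.2)) S
      (volume.prod volume) := by
    refine ContinuousOn.integrableOn_compact (isCompact_Icc.prod isCompact_Icc) ?_
      |>.mono_set (prod_mono Ioo_subset_Icc_self Ioo_subset_Icc_self)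
    refine continuousOn_fst.smul (hf.comp (by fun_prop) fun p hp ↦ ?_)
    simpa [hdist, abs_of_nonneg hp.1.1] using hp.1.2
  calc ∫ z in ball c R, f z = ∫ z, (ball c R).indicator f (c + z) := by
        rw [integral_add_left_eq_self, integral_indicator measurableSet_ball]
    _ = ∫ p in Complex.polarCoord.target,
          p.1 • (ball c R).indicator f (c + Complex.polarCoord.symm p) :=
        (Complex.integral_comp_polarCoord_symm _).symm
    _ = ∫ p in Complex.polarCoord.target,
          S.indicator (fun p ↦ p.1 • f (circleMap c p.1 p.2)) p := by
        refine setIntegral_congr_fun Complex.polarCoord.open_target.measurableSet fun p hp ↦ ?_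
        rw [Complex.polarCoord_target] at hp
        simp only [Complex.add_polarCoord_symm_eq_circleMap, indicator, mem_ball, hdist, S,
          mem_prod, mem_Ioo, abs_of_pos hp.1.out, hp.2.1, hp.2.2, and_true, hp.1.out, true_and]
        split_ifs <;> simp
    _ = ∫ p in S, p.1 • f (circleMap c p.1 p.2) := by
        rw [setIntegral_indicator hS, Complex.polarCoord_target,
          inter_eq_right.2 (prod_mono Ioo_subset_Ioi_self subset_rfl)]
    _ = ∫ r in Ioo 0 R, ∫ θ in Ioo (-π) π, r • f (circleMap c r θ) :=
        setIntegral_prod _ hint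
    _ = ∫ r in 0..R, (2 * π * r) • circleAverage f c r := by
        rw [intervalIntegral.integral_of_le hR, integral_Ioc_eq_integral_Ioo]
        refine setIntegral_congr_fun measurableSet_Ioo fun r _ ↦ ?_
        rw [integral_smul, setIntegral_Ioo_neg_pi_pi_comp_circleMap, smul_smul, mul_comm r]

end PolarCoord

namespace SubmeanOn

variable {f : ℂ → ℝ} {s : Set ℂ}

theorem le_circleAverage (hf : SubmeanOn f s) {c : ℂ} {r : ℝ} (hr : 0 < r)
    (hs : closedBall c r ⊆ s) : f c ≤ circleAverage f c r := by
  simpa [circleAverage_def, circleMap] using hf.2 c r hr hs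

theorem mul_le_setIntegral_ball (hf : SubmeanOn f s) {c : ℂ} {R : ℝ} (hR : 0 < R)
    (hs : closedBall c R ⊆ s) : π * R ^ 2 * f c ≤ ∫ z in ball c R, f z := by
  have hcont : ContinuousOn f (closedBall c R) := hf.1.mono hs
  rw [setIntegral_ball_eq_intervalIntegral_circleAverage hR.le hcont]
  calc π * R ^ 2 * f c = ∫ r in 0..R, (2 * π * r) * f c := by
        rw [intervalIntegral.integral_mul_const, intervalIntegral.integral_const_mul, integral_id]
        ring
    _ ≤ ∫ r in 0..R, (2 * π * r) • circleAverage f c r := by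
        refine intervalIntegral.integral_mono_on_of_le_Ioo hR.le
          ((by fun_prop : Continuous fun r : ℝ ↦ 2 * π * r * f c).intervalIntegrable _ _) ?_
          fun r hr ↦ ?_
        · refine ContinuousOn.intervalIntegrable_of_Icc hR.le
            ((continuousOn_const.mul continuousOn_id).smul ?_)
          exact (hcont.mono fun z hz ↦ mem_closedBall_iff_norm.2 hz.2).circleAverage
            fun r hr ↦ hr.1
        · exact mul_le_mul_of_nonneg_left
            (hf.le_circleAverage hr.1 ((closedBall_subset_closedBall hr.2.le).trans hs))
            (mul_nonneg (by positivity) hr.1.le)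

theorem setIntegral_ball_le_four_mul_setIntegral_ball_sdiff_ball (hf : SubmeanOn f s)
    {a : ℂ} {ρ : ℝ} (hρ : 0 < ρ) (hs : closedBall a (2 * ρ) ⊆ s)
    (hf₀ : ∀ z ∈ closedBall a (2 * ρ), 0 ≤ f z) :
    ∫ z in ball a ρ, f z ≤ 4 * ∫ z in ball a (2 * ρ) \ ball a ρ, f z := by
  have hρ₂ : closedBall a ρ ⊆ closedBall a (2 * ρ) := closedBall_subset_closedBall (by linarith)
  obtain ⟨z₀, hz₀, hmax⟩ := (isCompact_closedBall a ρ).exists_isMaxOn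
    (nonempty_closedBall.2 hρ.le) (hf.1.mono (hρ₂.trans hs))
  set M := f z₀
  set d := dist z₀ a
  set R := 2 * ρ - d
  have hd : d ≤ ρ := hz₀
  have hM : 0 ≤ M := hf₀ z₀ (hρ₂ hz₀)
  have hR : closedBall z₀ R ⊆ closedBall a (2 * ρ) :=
    closedBall_subset_closedBall' (sub_add_cancel _ _).le
  have hint : IntegrableOn f (closedBall a (2 * ρ)) :=
    (hf.1.mono hs).integrableOn_compact (isCompact_closedBall _ _)
  have hle_max {t : Set ℂ} (ht : t ⊆ closedBall a ρ) (ht' : volume t < ⊤) :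
      ∫ z in t, f z ≤ M * volume.real t := by
    refine (Real.le_norm_self _).trans (norm_setIntegral_le_of_norm_le_const ht' fun z hz ↦ ?_)
    rw [Real.norm_of_nonneg (hf₀ z (hρ₂ (ht hz)))]
    exact hmax (ht hz)
  have hinner : ∫ z in ball a ρ, f z ≤ M * (π * ρ ^ 2) := by
    simpa [Complex.volume_real_ball a hρ.le] using
      hle_max ball_subset_closedBall measure_ball_lt_top
  have hoverlap : ∫ z in ball z₀ R ∩ ball a ρ, f z ≤ M * (3 / 4 * (π * R ^ 2)) := by
    refine (hle_max (inter_subset_right.trans ball_subset_closedBall)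
      (measure_mono inter_subset_right |>.trans_lt measure_ball_lt_top)).trans ?_
    refine mul_le_mul_of_nonneg_left ((Complex.volume_real_ball_inter_ball_le ?_).trans ?_) hM
    · linarith
    · nlinarith [pi_pos, sq_nonneg (ρ - d)]
  have hannulus : ∫ z in ball z₀ R \ ball a ρ, f z ≤ ∫ z in ball a (2 * ρ) \ ball a ρ, f z := by
    refine setIntegral_mono_set (hint.mono_set (sdiff_subset.trans ball_subset_closedBall))
      (ae_restrict_of_forall_mem (measurableSet_ball.diff measurableSet_ball)
        fun z hz ↦ hf₀ z (ball_subset_closedBall hz.1)) ?_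
    exact (sdiff_subset_sdiff_left (ball_subset_ball' (sub_add_cancel _ _).le)).eventuallyLE
  have hdisc := hf.mul_le_setIntegral_ball (by linarith) (hR.trans hs)
  rw [← integral_inter_add_sdiff measurableSet_ball
    (hint.mono_set (ball_subset_closedBall.trans hR))] at hdisc
  nlinarith [mul_le_mul_of_nonneg_left (pow_le_pow_left₀ hρ.le (by linarith : ρ ≤ R) 2)
    (mul_nonneg pi_pos.le hM)]

end SubmeanOn

theorem subharmonic_mean_value_comparison :
    ∃ C : ℝ, 0 < C ∧
      ∀ (a : ℂ) (f : ℂ → ℝ) (s : Set ℂ), IsOpen s → Metric.closedBall a (1/2) ⊆ s →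
        (∀ z ∈ s, 0 ≤ f z) → SubmeanOn f s →
        (∫ z in Metric.ball a (1/4), f z) ≤
          C * ∫ z in Metric.ball a (1/2) \ Metric.ball a (1/4), f z := by
  refine ⟨4, by norm_num, fun a f s _ hs hf₀ hf ↦ ?_⟩
  have h := hf.setIntegral_ball_le_four_mul_setIntegral_ball_sdiff_ball (a := a) (ρ := 1 / 4)
    (by norm_num) (by norm_num; exact hs) fun z hz ↦ hf₀ z (by norm_num at hz; exact hs hz)
  norm_num at h ⊢
  exact h
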